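/- Let Q₈ denote the quaternion group of order eight and let G = (Circle × Q₈) ⧸ N, where N is the central subgroup of order two generated by (−1, −1). Then the commutator map c : G × G → G, c(x,y) = x⁻¹y⁻¹xy, is null-homotopic (so G is homotopy abelian), but G is not commutative. -/

import Mathlib

/-- The commutator map `c : G × G → G`, `c(x, y) = x⁻¹y⁻¹xy`, as a continuous map. -/
def commutatorMap (G : Type*) [Group G] [TopologicalSpace G] [IsTopologicalGroup G] :
    C(G × G, G) :=
  ⟨fun p => p.1⁻¹ * p.2⁻¹ * p.1 * p.2, by continuity⟩

/-- The quaternion group of order eight carries the discrete topology. -/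
instance : TopologicalSpace (QuaternionGroup 2) := ⊥

instance : DiscreteTopology (QuaternionGroup 2) := ⟨rfl⟩

instance : IsTopologicalGroup (QuaternionGroup 2) where
  continuous_mul := continuous_of_discreteTopology
  continuous_inv := continuous_of_discreteTopology

/-- The element `-1` of the circle group. -/
noncomputable def Circle.negOne : Circle :=
  ⟨-1, by
    show (-1 : ℂ) ∈ Metric.sphere (0 : ℂ) 1
    simp⟩

/-- The central subgroup of order two of `Circle × Q₈` generated by `(-1, -1)`, where
`-1 = a²` in `Q₈ = QuaternionGroup 2`. -/
noncomputable def centralTwo : Subgroup (Circle × QuaternionGroup 2) :=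
  Subgroup.zpowers (Circle.negOne, QuaternionGroup.a 2)

instance : centralTwo.Normal := by
  constructor
  intro x hx g
  obtain ⟨k, rfl⟩ := Subgroup.mem_zpowers_iff.mp hx
  have ha : ∀ q : QuaternionGroup 2, q * QuaternionGroup.a 2 = QuaternionGroup.a 2 * q := by
    decide
  have hz : Commute g (Circle.negOne, QuaternionGroup.a 2) :=
    Prod.ext (mul_comm _ _) (ha g.2)
  have h : Commute g ((Circle.negOne, QuaternionGroup.a 2) ^ k) := hz.zpow_right k
  rw [h.eq, mul_assoc, mul_inv_cancel, mul_one]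
  exact Subgroup.mem_zpowers_iff.mpr ⟨k, rfl⟩

/-- The quotient group `G = (Circle × Q₈) ⧸ ⟨(-1, -1)⟩`, a compact topological group. -/
noncomputable abbrev QG : Type :=
  (Circle × QuaternionGroup 2) ⧸ centralTwo

/-! In `G` the commutator of the classes of `(z, p)` and `(w, q)` is the class of
`(1, p⁻¹q⁻¹pq)`, and `p⁻¹q⁻¹pq ∈ {1, -1}` in `Q₈`. So the commutator map takes only the two
values `1` and `[(1, -1)] = [(-1, 1)]`, both in the image of the path-connected circle. A
continuous map with finite range in a T₁ space, all of whose values are joined to a base point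
`y₀`, is null-homotopic: move each value to `y₀` along a fixed path. On the other hand
`i⁻¹j⁻¹ij = -1` in `Q₈` and `(1, -1) ∉ N`, so the classes of `(1, i)` and `(1, j)` do not
commute. -/

open QuaternionGroup
open scoped commutatorElement

theorem ContinuousMap.nullhomotopic_of_finite_range {X Y : Type*} [TopologicalSpace X]
    [TopologicalSpace Y] [T1Space Y] (f : C(X, Y)) {y₀ : Y} (hfin : (Set.range f).Finite)
    (hjoin : Set.range f ⊆ pathComponent y₀) : f.Nullhomotopic := by
  -- a finite T₁ space is discrete
  have := hfin.to_subtype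
  let γ : (s : Set.range f) → Path (s : Y) y₀ := fun s => (hjoin s.2).symm.somePath
  have hγ : Continuous fun q : unitInterval × Set.range f => γ q.2 q.1 :=
    continuous_prod_of_discrete_right.mpr fun s => (γ s).continuous
  exact ⟨y₀, ⟨
    { toFun := fun p => γ (Set.rangeFactorization f p.2) p.1
      continuous_toFun :=
        hγ.comp (continuous_fst.prodMk (f.continuous.rangeFactorization.comp continuous_snd))
      map_zero_left := fun x => (γ _).source
      map_one_left := fun x => (γ _).target }⟩⟩

theorem Subgroup.mem_zpowers_iff_of_sq_eq_one {G : Type*} [Group G] {g x : G} (hg : g ^ 2 = 1) :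
    x ∈ zpowers g ↔ x = 1 ∨ x = g := by
  refine ⟨fun hx => ?_, by rintro (rfl | rfl) <;> simp⟩
  obtain ⟨k, rfl⟩ := mem_zpowers_iff.mp hx
  obtain ⟨m, rfl | rfl⟩ := Int.even_or_odd' k
  · exact .inl (by rw [zpow_mul, zpow_two, ← sq, hg, one_zpow])
  · exact .inr (by rw [zpow_add_one, zpow_mul, zpow_two, ← sq, hg, one_zpow, one_mul])

lemma Circle.negOne_ne_one : Circle.negOne ≠ 1 := fun h => by
  have : ((Circle.negOne : Circle) : ℂ) = 1 := by rw [h]; rfl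
  norm_num [Circle.negOne] at this

lemma Circle.negOne_sq : Circle.negOne ^ 2 = 1 :=
  Circle.ext (by rw [sq, Circle.coe_mul]; norm_num [Circle.negOne])

lemma mem_centralTwo_iff {g : Circle × QuaternionGroup 2} :
    g ∈ centralTwo ↔ g = 1 ∨ g = (Circle.negOne, a 2) :=
  Subgroup.mem_zpowers_iff_of_sq_eq_one (Prod.ext Circle.negOne_sq (by decide))

instance : IsClosed (centralTwo : Set (Circle × QuaternionGroup 2)) := by
  have : (centralTwo : Set (Circle × QuaternionGroup 2)) = {1, (Circle.negOne, a 2)} :=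
    Set.ext fun _ => mem_centralTwo_iff
  rw [this]
  exact (Set.toFinite _).isClosed

theorem commutatorMap_apply_eq_one_iff {G : Type*} [Group G] [TopologicalSpace G]
    [IsTopologicalGroup G] (p : G × G) : commutatorMap G p = 1 ↔ p.1 * p.2 = p.2 * p.1 := by
  have : commutatorMap G p = ⁅p.1⁻¹, p.2⁻¹⁆ := by
    simp [commutatorMap, commutatorElement_def]
  rw [this, commutatorElement_eq_one_iff_mul_comm, ← mul_inv_rev, ← mul_inv_rev, inv_inj,
    eq_comm]

lemma QuaternionGroup.inv_mul_inv_mul_mul_eq_one_or_eq_a_two (p q : QuaternionGroup 2) :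
    p⁻¹ * q⁻¹ * p * q = 1 ∨ p⁻¹ * q⁻¹ * p * q = a 2 := by
  revert p q
  decide

lemma commutatorMap_QG_mk (g h : Circle × QuaternionGroup 2) :
    commutatorMap QG (QuotientGroup.mk g, QuotientGroup.mk h) =
      QuotientGroup.mk ((1 : Circle), g.2⁻¹ * h.2⁻¹ * g.2 * h.2) :=
  congrArg QuotientGroup.mk (Prod.ext (by simp [mul_comm]) rfl)

lemma mk_one_a_two_eq : (QuotientGroup.mk ((1 : Circle), a 2) : QG) =
    QuotientGroup.mk (Circle.negOne, (1 : QuaternionGroup 2)) :=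
  QuotientGroup.eq.mpr (mem_centralTwo_iff.mpr (.inr (Prod.ext (by simp) (by decide))))

lemma mk_one_a_two_ne_one : (QuotientGroup.mk ((1 : Circle), a 2) : QG) ≠ 1 := by
  rw [Ne, QuotientGroup.eq_one_iff, mem_centralTwo_iff]
  rintro (h | h)
  · exact absurd (congrArg Prod.snd h) (by decide)
  · exact Circle.negOne_ne_one (congrArg Prod.fst h).symm

lemma joined_one_mk_one_a_two : Joined (1 : QG) (QuotientGroup.mk ((1 : Circle), a 2)) := by
  rw [mk_one_a_two_eq]
  exact (PathConnectedSpace.joined 1 Circle.negOne).map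
    (f := fun z => (QuotientGroup.mk (z, (1 : QuaternionGroup 2)) : QG)) (by fun_prop)

lemma commutatorMap_QG_mk_a_one_xa_zero :
    commutatorMap QG (QuotientGroup.mk ((1 : Circle), a 1), QuotientGroup.mk ((1 : Circle), xa 0)) =
      QuotientGroup.mk ((1 : Circle), a 2) := by
  rw [commutatorMap_QG_mk]
  rfl

lemma commutatorMap_QG_mem (p : QG × QG) :
    commutatorMap QG p ∈ ({1, QuotientGroup.mk ((1 : Circle), a 2)} : Set QG) := by
  obtain ⟨x, y⟩ := p
  obtain ⟨g, rfl⟩ := QuotientGroup.mk_surjective x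
  obtain ⟨h, rfl⟩ := QuotientGroup.mk_surjective y
  rcases QuaternionGroup.inv_mul_inv_mul_mul_eq_one_or_eq_a_two g.2 h.2 with hq | hq
  · exact .inl (by rw [commutatorMap_QG_mk, hq]; rfl)
  · exact .inr (by rw [commutatorMap_QG_mk, hq]; rfl)

/-- Remark 3.8 (`rem:homotopyabeliandoesnotimplycontractible`): the group
`G = (Circle × Q₈) ⧸ ⟨(-1, -1)⟩` is homotopy abelian (its commutator map is
null-homotopic) but not commutative. -/
theorem quotient_circle_quaternion_homotopy_abelian_not_commutative :
    (commutatorMap QG).Nullhomotopic ∧ ¬ ∀ x y : QG, x * y = y * x := by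
  refine ⟨(commutatorMap QG).nullhomotopic_of_finite_range (y₀ := 1) ?_ ?_, fun hcomm => ?_⟩
  · exact (Set.toFinite _).subset (Set.range_subset_iff.mpr commutatorMap_QG_mem)
  · rintro _ ⟨p, rfl⟩
    rcases commutatorMap_QG_mem p with h | h <;> rw [h]
    exacts [mem_pathComponent_self 1, joined_one_mk_one_a_two]
  · apply mk_one_a_two_ne_one
    rw [← commutatorMap_QG_mk_a_one_xa_zero, commutatorMap_apply_eq_one_iff]
    exact hcomm _ _
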